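/- Let G be the star K_{1,m+1} with center r, leaves r', r_1, …, r_m, where m ≥ 2, and let S ⊆ V(G) \ {r'}. Then S is a power dominating set of G if and only if r ∈ S or S = {r_1, …, r_m}. -/
import Mathlib


/-- The power domination propagation sequence: `pIter G S 0 = N[S]` and
`pIter G S (k+1)` adds every vertex that is the unique unobserved neighbor
of some observed vertex. -/
def pIter {V : Type*} (G : SimpleGraph V) (S : Set V) : ℕ → Set V
  | 0 => {v | v ∈ S ∨ ∃ s ∈ S, G.Adj s v}
  | k + 1 => pIter G S k ∪ {x | ∃ v ∈ pIter G S k, G.neighborSet v \ pIter G S k = {x}}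

/-- The stable limit `P^∞(S)` of the power domination process. -/
def pInf {V : Type*} (G : SimpleGraph V) (S : Set V) : Set V := ⋃ k, pIter G S k

/-- `S` is a power dominating set for `G` if `P^∞(S) = V`. -/
def PowerDominates {V : Type*} (G : SimpleGraph V) (S : Set V) : Prop :=
  pInf G S = Set.univ

/-- The star `T⁺_{m,1}`: center `r = none` adjacent to the stem
`r' = some none` and to the leaves `r_i = some (some i)` for `i : Fin m`. -/
def starG (m : ℕ) : SimpleGraph (Option (Option (Fin m))) :=
  SimpleGraph.fromRel (fun a _ => a = none)

lemma starG_adj {m : ℕ} {a b : Option (Option (Fin m))} :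
    (starG m).Adj a b ↔ a ≠ b ∧ (a = none ∨ b = none) := by
  simp [starG, SimpleGraph.fromRel_adj]

/-- For the star K_{1,m+1} with center r, leaves r', r_1, …, r_m (m ≥ 2) and
S ⊆ V \ {r'}: S power dominates iff r ∈ S or S = {r_1, …, r_m}. -/
theorem stmt5 (m : ℕ) (hm : 2 ≤ m) (S : Set (Option (Option (Fin m))))
    (hS : some none ∉ S) :
    PowerDominates (starG m) S ↔
      none ∈ S ∨ S = {v | ∃ i : Fin m, v = some (some i)} := by
  constructor
  · intro h
    by_cases hr : none ∈ S
    · exact Or.inl hr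
    right
    by_contra hne
    have hsub : S ⊆ {v | ∃ i : Fin m, v = some (some i)} := by
      intro v hv
      match v with
      | none => exact absurd hv hr
      | some none => exact absurd hv hS
      | some (some i) => exact ⟨i, rfl⟩
    obtain ⟨j, hj⟩ : ∃ j : Fin m, some (some j) ∉ S := by
      by_contra hall
      push_neg at hall
      exact hne (Set.Subset.antisymm hsub (by rintro v ⟨i, rfl⟩; exact hall i))
    have key : ∀ k, pIter (starG m) S k ⊆ S ∪ {none} := by
      intro k
      induction k with
      | zero =>
        intro v hv
        rcases hv with hv | ⟨s, hs, hadj⟩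
        · exact Or.inl hv
        · rcases hsub hs with ⟨i, rfl⟩
          rw [starG_adj] at hadj
          rcases hadj.2 with h1 | h2
          · exact absurd h1 (by simp)
          · exact Or.inr h2
      | succ k ih =>
        intro v hv
        rcases hv with hv | ⟨w, hw, hset⟩
        · exact ih hv
        rcases ih hw with hwS | hwnone
        · rcases hsub hwS with ⟨i, rfl⟩
          have hv' : v ∈ (starG m).neighborSet (some (some i)) \ pIter (starG m) S k := by
            rw [hset]; rfl
          have hadj := hv'.1
          rw [SimpleGraph.mem_neighborSet, starG_adj] at hadj
          rcases hadj.2 with h1 | h2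
          · exact absurd h1 (by simp)
          · exact Or.inr h2
        · exfalso
          have hwn : w = none := hwnone
          subst hwn
          have h1 : (some none : Option (Option (Fin m))) ∈
              (starG m).neighborSet none \ pIter (starG m) S k := by
            refine ⟨?_, ?_⟩
            · rw [SimpleGraph.mem_neighborSet, starG_adj]
              exact ⟨by simp, Or.inl rfl⟩
            · intro hmem
              rcases ih hmem with h' | h'
              · exact hS h'
              · simp at h'
          have h2 : (some (some j) : Option (Option (Fin m))) ∈
              (starG m).neighborSet none \ pIter (starG m) S k := by
            refine ⟨?_, ?_⟩
            · rw [SimpleGraph.mem_neighborSet, starG_adj]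
              exact ⟨by simp, Or.inl rfl⟩
            · intro hmem
              rcases ih hmem with h' | h'
              · exact hj h'
              · simp at h'
          rw [hset] at h1 h2
          simp only [Set.mem_singleton_iff] at h1 h2
          rw [← h2] at h1
          simp at h1
    have hmem : (some none : Option (Option (Fin m))) ∈ pInf (starG m) S := by
      rw [h]; trivial
    obtain ⟨k, hk⟩ := Set.mem_iUnion.mp hmem
    rcases key k hk with h' | h'
    · exact hS h'
    · simp at h'
  · rintro (hr | rfl)
    · have h0 : pIter (starG m) S 0 = Set.univ := by
        apply Set.eq_univ_of_forall
        intro v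
        by_cases hv : v = none
        · exact Or.inl (hv ▸ hr)
        · exact Or.inr ⟨none, hr, by rw [starG_adj]; exact ⟨Ne.symm hv, Or.inl rfl⟩⟩
      apply Set.eq_univ_of_univ_subset
      rw [← h0]
      exact Set.subset_iUnion _ 0
    · set L := {v : Option (Option (Fin m)) | ∃ i : Fin m, v = some (some i)} with hL
      have h0 : pIter (starG m) L 0 = {some none}ᶜ := by
        ext v
        constructor
        · rintro (⟨i, rfl⟩ | ⟨s, ⟨i, rfl⟩, hadj⟩)
          · simp
          · rw [starG_adj] at hadj
            rcases hadj.2 with h1 | h2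
            · simp at h1
            · subst h2; simp
        · intro hv
          match v with
          | none =>
            exact Or.inr ⟨some (some ⟨0, by omega⟩), ⟨_, rfl⟩,
              by rw [starG_adj]; exact ⟨by simp, Or.inr rfl⟩⟩
          | some none => exact absurd rfl hv
          | some (some i) => exact Or.inl ⟨i, rfl⟩
      have h1 : pIter (starG m) L 1 = Set.univ := by
        apply Set.eq_univ_of_forall
        intro v
        by_cases hv : v = some none
        · refine Or.inr ⟨none, ?_, ?_⟩
          · rw [h0]; simp
          · rw [h0]
            ext u
            simp only [Set.mem_diff, SimpleGraph.mem_neighborSet, starG_adj,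
              Set.mem_compl_iff, Set.mem_singleton_iff, not_not, hv]
            constructor
            · rintro ⟨_, h'⟩; exact h'
            · rintro rfl; exact ⟨⟨by simp, by simp⟩, rfl⟩
        · exact Or.inl (by rw [h0]; exact hv)
      apply Set.eq_univ_of_univ_subset
      rw [← h1]
      exact Set.subset_iUnion _ 1
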